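/- Let M ≥ 1 be an integer, λ₁, …, λ_M real numbers, r₁ > r₂ > ⋯ > r_M > 0, and n a positive integer. Then for all integers 1 ≤ i < j ≤ M, there holds the recursion K_M^{i,j}(n) = (t_{i,j} + 1) · K_M^{j,j+1}(n) − (−2λ_j + 1) · K_M^{i,j+1}(n), where t_{p,q} := (r_q/r_p)^{2n}. -/
import Mathlib


open Matrix

/-- `t_{p,q} = (r_q / r_p)^{2n}`. -/
noncomputable def tpow (r : ℕ → ℝ) (n p q : ℕ) : ℝ := (r q / r p) ^ (2 * n)

/-- The `(M-j+1) × (M-j+1)` matrix whose determinant is `K_M^{i,j}(n)`: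
columns indexed by `m = j, …, M`; the first row has entries `t_{i,m} + 1` for
`j ≤ m ≤ M-1` and `t_{i,M} + 2λ_M` in the last column; the remaining rows, indexed by
`q = j, …, M-1`, have entries `0` in columns `m < q`, `-2λ_q + 1` in column `m = q`,
`t_{q,m} + 1` in columns `q < m ≤ M-1`, and `t_{q,M} + 2λ_M` in the last column. -/
noncomputable def Kmat (M : ℕ) (lam r : ℕ → ℝ) (n i j : ℕ) :
    Matrix (Fin (M - j + 1)) (Fin (M - j + 1)) ℝ :=
  Matrix.of fun p c =>
    let m := j + (c : ℕ)
    if (p : ℕ) = 0 then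
      if m = M then tpow r n i M + 2 * lam M else tpow r n i m + 1
    else
      let q := j + (p : ℕ) - 1
      if m < q then 0
      else if m = q then -2 * lam q + 1
      else if m = M then tpow r n q M + 2 * lam M
      else tpow r n q m + 1

noncomputable def Kfun (M : ℕ) (lam r : ℕ → ℝ) (n i j p c : ℕ) : ℝ :=
  let m := j + c
  if p = 0 then
    if m = M then tpow r n i M + 2 * lam M else tpow r n i m + 1
  else
    let q := j + p - 1
    if m < q then 0
    else if m = q then -2 * lam q + 1
    else if m = M then tpow r n q M + 2 * lam M
    else tpow r n q m + 1

lemma Kmat_apply (M : ℕ) (lam r : ℕ → ℝ) (n i j : ℕ) (p c : Fin (M - j + 1)) :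
    Kmat M lam r n i j p c = Kfun M lam r n i j p c := rfl

lemma Kfun_shift0 (M : ℕ) (lam r : ℕ → ℝ) (n i j p c : ℕ) :
    Kfun M lam r n i j (p + 1) (c + 1) = Kfun M lam r n j (j + 1) p c := by
  simp only [Kfun]
  rcases Nat.eq_zero_or_pos p with hp | hp
  · subst hp
    have h0 : ¬ ((0:ℕ) + 1 = 0) := by omega
    simp only [h0, if_false, if_true, show j + (0+1) - 1 = j from by omega,
      show j + (c+1) = j + 1 + c from by omega, if_pos rfl]
    have h1 : ¬ (j + 1 + c < j) := by omega
    have h2 : ¬ (j + 1 + c = j) := by omega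
    simp [h1, h2]
  · have h0 : ¬ (p + 1 = 0) := by omega
    have h0' : ¬ (p = 0) := by omega
    simp only [h0, h0', if_false, show j + (p+1) - 1 = j + p from by omega,
      show j + 1 + p - 1 = j + p from by omega, show j + (c+1) = j + 1 + c from by omega]

lemma Kfun_shift1a (M : ℕ) (lam r : ℕ → ℝ) (n i j c : ℕ) :
    Kfun M lam r n i j 0 (c + 1) = Kfun M lam r n i (j + 1) 0 c := by
  simp only [Kfun, if_pos rfl, show j + (c+1) = j + 1 + c from by omega]
  simp

lemma Kfun_shift1b (M : ℕ) (lam r : ℕ → ℝ) (n i j p c : ℕ) :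
    Kfun M lam r n i j (p + 2) (c + 1) = Kfun M lam r n i (j + 1) (p + 1) c := by
  simp only [Kfun]
  have h0 : ¬ (p + 2 = 0) := by omega
  have h0' : ¬ (p + 1 = 0) := by omega
  simp only [h0, h0', if_false, show j + (p+2) - 1 = j + p + 1 from by omega,
    show j + 1 + (p+1) - 1 = j + p + 1 from by omega,
    show j + (c+1) = j + 1 + c from by omega]

/-- `K_M^{i,j}(n)` for `j ≤ M`, with the convention `K_M^{i,M+1}(n) = 1`. -/
noncomputable def Kdet (M : ℕ) (lam r : ℕ → ℝ) (n i j : ℕ) : ℝ :=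
  if j ≤ M then (Kmat M lam r n i j).det else 1

/-- The recursion `K_M^{i,j} = (t_{i,j}+1) K_M^{j,j+1} - (-2λ_j+1) K_M^{i,j+1}`. -/
theorem Kdet_recursion (M : ℕ) (hM : 1 ≤ M) (lam r : ℕ → ℝ)
    (hr : ∀ k, 1 ≤ k → k < M → r (k + 1) < r k) (hrM : 0 < r M)
    (n : ℕ) (hn : 0 < n) :
    ∀ i j : ℕ, 1 ≤ i → i < j → j ≤ M →
      Kdet M lam r n i j =
        (tpow r n i j + 1) * Kdet M lam r n j (j + 1)
          - (-2 * lam j + 1) * Kdet M lam r n i (j + 1) := by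
  intro i j hi hij hjM
  rcases eq_or_lt_of_le hjM with hjM' | hjM'
  · -- j = M
    subst hjM'
    have hnot : ¬ (j + 1 ≤ j) := by omega
    simp only [Kdet, if_pos le_rfl, if_neg hnot]
    rw [← Matrix.det_submatrix_equiv_self (finCongr (show 1 = j - j + 1 by omega)),
      Matrix.det_fin_one]
    simp only [Matrix.submatrix_apply, Kmat_apply, finCongr_apply, Fin.coe_cast,
      Fin.val_zero]
    simp only [Kfun, if_pos rfl, Nat.add_zero, if_true]
    ring
  · -- j < M
    have hj1 : j + 1 ≤ M := hjM'
    simp only [Kdet, if_pos hjM, if_pos hj1]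
    obtain ⟨k, hk⟩ : ∃ k, M - j + 1 = k + 2 := ⟨M - j - 1, by omega⟩
    have hk' : M - (j + 1) + 1 = k + 1 := by omega
    rw [← Matrix.det_submatrix_equiv_self (finCongr hk.symm) (Kmat M lam r n i j)]
    set B := (Kmat M lam r n i j).submatrix (finCongr hk.symm) (finCongr hk.symm) with hB
    have hBval : ∀ (p c : Fin (k + 2)), B p c = Kfun M lam r n i j p c := by
      intro p c
      simp [hB, Kmat_apply]
    rw [Matrix.det_succ_column_zero]
    rw [Fin.sum_univ_succ, Fin.sum_univ_succ]
    have hzero : ∀ p : Fin k, B p.succ.succ 0 = 0 := by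
      intro p
      rw [hBval]
      simp only [Fin.val_succ, Fin.val_zero]
      simp only [Kfun]
      have h0 : ¬ (p.1 + 1 + 1 = 0) := by omega
      rw [if_neg h0, if_pos (by omega : j + 0 < j + (p.1 + 1 + 1) - 1)]
    have hB00 : B 0 0 = tpow r n i j + 1 := by
      rw [hBval]
      simp only [Fin.val_zero]
      simp only [Kfun, if_pos rfl, Nat.add_zero, if_neg (by omega : ¬ j = M)]
      simp
    have hB10 : B 1 0 = -2 * lam j + 1 := by
      rw [hBval]
      simp only [Fin.val_one, Fin.val_zero]
      simp only [Kfun]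
      rw [if_neg (by omega : ¬ (1:ℕ) = 0), if_neg (by omega : ¬ j + 0 < j + 1 - 1),
        if_pos (by omega : j + 0 = j + 1 - 1)]
      rw [show j + 1 - 1 = j from by omega]
    have hminor0 : (B.submatrix (Fin.succAbove 0) Fin.succ).det
        = (Kmat M lam r n j (j + 1)).det := by
      rw [← Matrix.det_submatrix_equiv_self (finCongr hk'.symm) (Kmat M lam r n j (j + 1))]
      congr 1
      ext p c
      rw [Matrix.submatrix_apply, Fin.succAbove_zero, hBval]
      simp only [Matrix.submatrix_apply, Kmat_apply, finCongr_apply, Fin.coe_cast,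
        Fin.val_succ]
      exact Kfun_shift0 M lam r n i j p c
    have hminor1 : (B.submatrix (Fin.succAbove 1) Fin.succ).det
        = (Kmat M lam r n i (j + 1)).det := by
      rw [← Matrix.det_submatrix_equiv_self (finCongr hk'.symm) (Kmat M lam r n i (j + 1))]
      congr 1
      ext p c
      rw [Matrix.submatrix_apply]
      induction p using Fin.cases with
      | zero =>
          have h1 : (1 : Fin (k + 2)).succAbove 0 = 0 := by
            apply Fin.succAbove_of_castSucc_lt
            simp [Fin.lt_def]
          rw [h1, hBval]
          simp only [Matrix.submatrix_apply, Kmat_apply, finCongr_apply, Fin.coe_cast,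
            Fin.val_succ, Fin.val_zero]
          exact Kfun_shift1a M lam r n i j c
      | succ q =>
          have h1 : (1 : Fin (k + 2)).succAbove q.succ = q.succ.succ := by
            apply Fin.succAbove_of_le_castSucc
            simp [Fin.le_def]
          rw [h1, hBval]
          simp only [Matrix.submatrix_apply, Kmat_apply, finCongr_apply, Fin.coe_cast,
            Fin.val_succ]
          exact Kfun_shift1b M lam r n i j q c
    rw [Finset.sum_congr rfl (fun p _ => by rw [hzero p]; ring : ∀ p ∈ Finset.univ,
      (-1 : ℝ) ^ ((p : Fin k).succ.succ : ℕ) * B p.succ.succ 0 *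
        (B.submatrix p.succ.succ.succAbove Fin.succ).det = 0)]
    rw [Finset.sum_const_zero, show (Fin.succ (0 : Fin (k+1))) = (1 : Fin (k+2)) from rfl,
      hB00, hB10, hminor0, hminor1]
    simp only [Fin.val_zero, Fin.val_one, Fin.val_succ, pow_zero, pow_one]
    ring
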